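/- arXiv:1903.09695 — 2 statements merged into one kernel-verified Lean document; each statement's English description precedes it below -/
import Mathlib

section
/- Consider the Dickson nearfield setup. Let r ≠ s be positive integers with r dividing n and s dividing n, and let α ∈ g^{[r]_q}H and β ∈ g^{[s]_q}H be such that α+β ∈ H. Assume that n divides (q^n−1)/(q^r−1) or n divides (q^n−1)/(q^s−1). Let S = {g^m : 0 ≤ m < q^n−1, (q^n−1) divides m(q^r−1), and (q^n−1) divides m(q^s−1)}. Then S ⊆ D(α,β) ∩ H. -/
/-- `(q, n)` is a Dickson pair: `q` is a prime power, every prime divisor of `n`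
divides `q - 1`, and if `q ≡ 3 (mod 4)` then `4` does not divide `n`. -/
def IsDicksonPair (q n : ℕ) : Prop :=
  0 < q ∧ 0 < n ∧ (∃ p l : ℕ, Nat.Prime p ∧ 0 < l ∧ q = p ^ l) ∧
    (∀ p : ℕ, Nat.Prime p → p ∣ n → p ∣ q - 1) ∧ (q % 4 = 3 → ¬ 4 ∣ n)

/-- `[k]_q = 1 + q + q^2 + ⋯ + q^(k-1)`. -/
def dq (q k : ℕ) : ℕ := ∑ i ∈ Finset.range k, q ^ i

/-- `x` lies in the coset `g^([k]_q) • H` where `H = ⟨g^n⟩`. -/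
def inCoset {F : Type*} [Field F] (g : F) (q n k : ℕ) (x : F) : Prop :=
  ∃ j : ℕ, x = g ^ dq q k * (g ^ n) ^ j

lemma dq_mul (q m p : ℕ) : dq q (m * p) = dq q m * dq (q ^ m) p := by
  induction p with
  | zero => simp [dq]
  | succ p ih =>
    rw [Nat.mul_succ, dq, Finset.sum_range_add, ← dq, ih,
      show dq (q ^ m) (p + 1) = dq (q ^ m) p + (q ^ m) ^ p from Finset.sum_range_succ _ p,
      Nat.mul_add]
    congr 1
    rw [dq, Finset.sum_mul]
    refine Finset.sum_congr rfl fun i _ => ?_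
    rw [← pow_mul, ← pow_add, Nat.add_comm]

lemma n_dvd_dq (q : ℕ) (hq : 1 ≤ q) : ∀ n : ℕ, 0 < n →
    (∀ p : ℕ, Nat.Prime p → p ∣ n → p ∣ q - 1) → n ∣ dq q n := by
  intro n
  induction n using Nat.strong_induction_on with
  | _ n ih =>
    intro hn hp
    rcases eq_or_ne n 1 with rfl | hn1
    · exact one_dvd _
    obtain ⟨p, hpp, m, rfl⟩ := Nat.exists_prime_and_dvd hn1
    have hm0 : 0 < m := by
      rcases Nat.eq_zero_or_pos m with rfl | h
      · simp at hn
      · exact h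
    have hlt : m < p * m := by
      have h2 := hpp.two_le
      calc m = 1 * m := (one_mul m).symm
      _ < p * m := (Nat.mul_lt_mul_right hm0).mpr (by omega)
    have hq1 : (q : ZMod p) = 1 := by
      have h := (ZMod.natCast_eq_zero_iff (q - 1) p).2
        (hp p hpp ⟨m, rfl⟩)
      rw [Nat.cast_sub hq] at h
      push_cast at h
      exact sub_eq_zero.mp h
    have hpdq : p ∣ dq (q ^ m) p := by
      rw [← ZMod.natCast_eq_zero_iff]
      unfold dq
      push_cast
      simp [hq1, ZMod.natCast_self]
    have hmdq : m ∣ dq q m :=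
      ih m hlt hm0 (fun t ht htd => hp t ht (htd.mul_left p))
    rw [mul_comm p m, dq_mul]
    exact mul_dvd_mul hmdq hpdq

/-- Dickson nearfield setup: let `r ≠ s` divide `n`, `α ∈ g^([r]_q) H`,
`β ∈ g^([s]_q) H`, `α + β ∈ H`, and suppose `n` divides `(q^n-1)/(q^r-1)` or
`(q^n-1)/(q^s-1)`. Then the set `S` of powers `g^m` with `0 ≤ m < q^n - 1` such that
`q^n - 1` divides both `m(q^r - 1)` and `m(q^s - 1)` satisfies `S ⊆ D(α,β) ∩ H`. -/
theorem powers_subset_distributiveSet_inter_H {F : Type*} [Field F] [Fintype F]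
    (q n : ℕ) (hqn : IsDicksonPair q n)
    (hcard : Fintype.card F = q ^ n)
    (g : F) (hg : ∀ x : F, x ≠ 0 → ∃ j : ℕ, x = g ^ j)
    (circ : F → F → F)
    (hcirc0 : ∀ lam : F, circ 0 lam = 0)
    (hcirc : ∀ k : ℕ, 1 ≤ k → k ≤ n → ∀ x : F, inCoset g q n k x →
      ∀ lam : F, circ x lam = x * lam ^ q ^ k)
    (α β : F) (r s : ℕ) (hr : 0 < r) (hs : 0 < s) (hrs : r ≠ s)
    (hrn : r ∣ n) (hsn : s ∣ n)
    (hcα : inCoset g q n r α) (hcβ : inCoset g q n s β)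
    (hcαβ : ∃ j : ℕ, α + β = (g ^ n) ^ j)
    (hdvd : n ∣ (q ^ n - 1) / (q ^ r - 1) ∨ n ∣ (q ^ n - 1) / (q ^ s - 1)) :
    {x : F | ∃ m : ℕ, m < q ^ n - 1 ∧ (q ^ n - 1) ∣ m * (q ^ r - 1) ∧
        (q ^ n - 1) ∣ m * (q ^ s - 1) ∧ x = g ^ m} ⊆
      {lam : F | circ (α + β) lam = circ α lam + circ β lam} ∩
        {x : F | ∃ j : ℕ, x = (g ^ n) ^ j} := by
  obtain ⟨hq0, hn0, ⟨p, l, hpp, hl, hql⟩, hprim, -⟩ := hqn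
  have hq2 : 2 ≤ q := hql ▸ (hpp.two_le.trans (Nat.le_self_pow (by omega) p))
  have hn2 : 2 ≤ n := by
    by_contra h
    have hn1 : n = 1 := by omega
    subst hn1
    exact hrs ((Nat.dvd_one.mp hrn).trans (Nat.dvd_one.mp hsn).symm)
  have hqn4 : 4 ≤ q ^ n :=
    calc (4:ℕ) = 2 ^ 2 := rfl
    _ ≤ q ^ 2 := Nat.pow_le_pow_left hq2 2
    _ ≤ q ^ n := Nat.pow_le_pow_right (by omega) hn2
  have hgne : g ≠ 0 := by
    intro hg0
    have hall : ∀ x : F, x = 0 ∨ x = 1 := by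
      intro x
      rcases eq_or_ne x 0 with h | h
      · exact Or.inl h
      · obtain ⟨j, hj⟩ := hg x h
        rcases Nat.eq_zero_or_pos j with rfl | hj0
        · right; simpa using hj
        · exfalso; exact h (by rw [hj, hg0, zero_pow (by omega)])
    have hcard2 : 2 < Fintype.card F := by omega
    obtain ⟨a, b, c, hab, hac, hbc⟩ := Fintype.two_lt_card_iff.mp hcard2
    rcases hall a with rfl | rfl <;> rcases hall b with rfl | rfl <;>
      rcases hall c with rfl | rfl <;> simp_all
  have hg1 : g ^ (q ^ n - 1) = 1 := by
    have h := FiniteField.pow_card_sub_one_eq_one g hgne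
    rwa [hcard] at h
  have hperiod : ∀ a c : ℕ, g ^ (a + c * (q ^ n - 1)) = g ^ a := by
    intro a c
    rw [pow_add, pow_mul', hg1, one_pow, mul_one]
  have hfix : ∀ (m k : ℕ), (q ^ n - 1) ∣ m * (q ^ k - 1) → (g ^ m) ^ q ^ k = g ^ m := by
    intro m k hd
    obtain ⟨c, hc⟩ := hd
    have hqk : 1 ≤ q ^ k := Nat.one_le_pow _ _ (by omega)
    have hmq : m * q ^ k = m + c * (q ^ n - 1) := by
      calc m * q ^ k = m * (1 + (q ^ k - 1)) := by congr 1; omega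
        _ = m + m * (q ^ k - 1) := by ring
        _ = m + c * (q ^ n - 1) := by rw [hc, Nat.mul_comm]
    rw [← pow_mul, hmq, hperiod]
  intro x hx
  obtain ⟨m, hm, hdr, hds, rfl⟩ := hx
  have hsubdvd : ∀ k : ℕ, k ∣ n → (q ^ k - 1) ∣ (q ^ n - 1) := by
    intro k hk
    obtain ⟨t, rfl⟩ := hk
    rw [pow_mul]
    simpa using Nat.sub_dvd_pow_sub_pow (q ^ k) 1 t
  have hnm : n ∣ m := by
    have key : ∀ k : ℕ, 0 < k → k ∣ n → (q ^ n - 1) ∣ m * (q ^ k - 1) →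
        n ∣ (q ^ n - 1) / (q ^ k - 1) → n ∣ m := by
      intro k hk hkn hdm hnd
      obtain ⟨c, hc⟩ := hdm
      obtain ⟨d, hdq⟩ := hsubdvd k hkn
      have hk1 : 0 < q ^ k - 1 := by
        have h2 : 2 ≤ q ^ k :=
          le_trans hq2 (Nat.le_self_pow (by omega) q)
        omega
      have hd_eq : (q ^ n - 1) / (q ^ k - 1) = d := by
        rw [hdq]; exact Nat.mul_div_cancel_left d hk1
      have hmcd : m = c * d := by
        have h1 : m * (q ^ k - 1) = c * d * (q ^ k - 1) := by
          rw [hc, hdq]; ring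
        exact Nat.eq_of_mul_eq_mul_right hk1 h1
      rw [hmcd]
      exact Dvd.dvd.mul_left (hd_eq ▸ hnd) c
    rcases hdvd with h | h
    · exact key r hr hrn hdr h
    · exact key s hs hsn hds h
  constructor
  · show circ (α + β) (g ^ m) = circ α (g ^ m) + circ β (g ^ m)
    have hca : circ α (g ^ m) = α * g ^ m := by
      rw [hcirc r hr (Nat.le_of_dvd hn0 hrn) α hcα, hfix m r hdr]
    have hcb : circ β (g ^ m) = β * g ^ m := by
      rw [hcirc s hs (Nat.le_of_dvd hn0 hsn) β hcβ, hfix m s hds]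
    rw [hca, hcb]
    rcases eq_or_ne (α + β) 0 with h0 | h0
    · rw [h0, hcirc0]
      have h2 : α * g ^ m + β * g ^ m = (α + β) * g ^ m := by ring
      rw [h2, h0, zero_mul]
    · obtain ⟨j, hj⟩ := hcαβ
      have hDn : n ∣ dq q n := n_dvd_dq q (by omega) n hn0 hprim
      set D := dq q n with hD
      have hcoset : inCoset g q n n (α + β) := by
        refine ⟨(n * j + D * (q ^ n - 1) - D) / n, ?_⟩
        have h1 : 1 ≤ q ^ n - 1 := by omega
        have hle : D ≤ n * j + D * (q ^ n - 1) := by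
          have h2 : D * 1 ≤ D * (q ^ n - 1) := Nat.mul_le_mul_left D h1
          omega
        have hdvdX : n ∣ n * j + D * (q ^ n - 1) - D :=
          Nat.dvd_sub (Nat.dvd_add ⟨j, rfl⟩ (hDn.mul_right _)) hDn
        rw [hj, ← pow_mul, ← pow_mul, ← pow_add, Nat.mul_div_cancel' hdvdX,
          show D + (n * j + D * (q ^ n - 1) - D) = n * j + D * (q ^ n - 1) by omega,
          hperiod (n * j) D]
      rw [hcirc n (by omega) (le_refl n) _ hcoset, hfix m n ⟨m, by ring⟩]
      ring
  · obtain ⟨e, rfl⟩ := hnm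
    exact ⟨e, by rw [pow_mul]⟩
end

section
/- Let (q,n) be a Dickson pair with n > 2 and consider the Dickson nearfield setup. Then for every α, β ∈ F, the set D(α,β) contains 0 and 1, is closed under addition, and is closed under multiplication by every element of the subfield {k ∈ F : k^q = k}; consequently there exists a positive integer k with |D(α,β)| = q^k. -/
/-!
For a Dickson pair, `n ∣ [d]_q` forces `n ∣ d`: at an odd prime `p ∣ n`, or at `p = 2` when
`4 ∣ q - 1`, lifting the exponent gives `v_p [d]_q = v_p d`, and otherwise `4 ∤ n` while
`[d]_q ≡ d (mod 2)`. Since `q` is prime to `n`, `[a]_q ≡ [b]_q (mod n)` gives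
`n ∣ [b - a]_q`, so `[1]_q, …, [n]_q` are distinct modulo `n`; hence they cover all residues,
`n ∣ [n]_q ∣ q^n - 1`, and the cosets `g^([k]_q) H` cover `F*`. Thus `α`, `β` and `α + β` act on
the right by Frobenius powers `λ ↦ λ ^ q ^ a`, `λ ^ q ^ b`, `λ ^ q ^ c`, all linear over the
fixed field `E = {x | x ^ q = x}`, which has `gcd(q^n - 1, q - 1) + 1 = q` elements. So
`D(α, β)` is the `E`-subspace `{λ | (α + β) λ^(q^c) = α λ^(q^a) + β λ^(q^b)}`, which contains `1`.
-/

lemma not_dvd_of_dvd_sub_one {p q : ℕ} (hp : p.Prime) (hq : 1 ≤ q) (h : p ∣ q - 1) :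
    ¬ p ∣ q := fun h' =>
  hp.one_lt.ne' (Nat.dvd_one.mp (by simpa [Nat.sub_sub_self hq] using Nat.dvd_sub h' h))

lemma dq_add (q a b : ℕ) : dq q (a + b) = dq q a + q ^ a * dq q b := by
  simp only [dq, Finset.sum_range_add, Finset.mul_sum, pow_add]

lemma dq_pos (q : ℕ) {d : ℕ} (hd : d ≠ 0) : 0 < dq q d := by
  simpa [dq, Nat.one_le_iff_ne_zero, Nat.pos_iff_ne_zero] using
    Finset.single_le_sum (f := (q ^ ·)) (fun _ _ => Nat.zero_le _)
      (Finset.mem_range.mpr (Nat.pos_of_ne_zero hd))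

lemma dq_mul_sub_one {q : ℕ} (hq : 1 ≤ q) (k : ℕ) : dq q k * (q - 1) = q ^ k - 1 :=
  geom_sum_mul_of_one_le hq k

lemma dq_modEq_of_modEq_one {q m : ℕ} (hq : q ≡ 1 [MOD m]) (d : ℕ) : dq q d ≡ d [MOD m] := by
  induction d with
  | zero => rfl
  | succ d ih => simpa [dq, Finset.sum_range_succ] using ih.add (hq.pow d)

lemma padicValNat_pow_sub_one {p q : ℕ} [Fact p.Prime] (hq : 1 < q) (hpq : p ∣ q - 1)
    (h2 : p = 2 → 4 ∣ q - 1) {d : ℕ} (hd : d ≠ 0) :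
    padicValNat p (q ^ d - 1) = padicValNat p (q - 1) + padicValNat p d := by
  have hpq' := not_dvd_of_dvd_sub_one Fact.out hq.le hpq
  rcases (Fact.out : p.Prime).eq_two_or_odd' with rfl | hodd
  · have h1 : 1 < q ^ d := Nat.one_lt_pow hd hq
    have key := Int.two_pow_sub_pow' d (x := q) (y := 1)
      (by simpa [Nat.cast_sub hq.le] using Int.natCast_dvd_natCast.mpr (h2 rfl))
      (by exact_mod_cast hpq')
    rw [← Nat.cast_inj (R := ℕ∞), Nat.cast_add, padicValNat_eq_emultiplicity (by omega),
      padicValNat_eq_emultiplicity (by omega), padicValNat_eq_emultiplicity hd]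
    simpa [← Int.natCast_emultiplicity, Nat.cast_sub h1.le, Nat.cast_sub hq.le] using key
  · simpa using padicValNat.pow_sub_pow hodd hq hpq hpq' hd

lemma padicValNat_dq {p q : ℕ} [Fact p.Prime] (hq : 1 < q) (hpq : p ∣ q - 1)
    (h2 : p = 2 → 4 ∣ q - 1) {d : ℕ} (hd : d ≠ 0) :
    padicValNat p (dq q d) = padicValNat p d := by
  have := padicValNat.mul (p := p) (dq_pos q hd).ne' (by omega : q - 1 ≠ 0)
  rw [dq_mul_sub_one hq.le, padicValNat_pow_sub_one hq hpq h2 hd] at this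
  omega

namespace IsDicksonPair

variable {q n : ℕ}

lemma one_lt (h : IsDicksonPair q n) : 1 < q := by
  obtain ⟨-, -, ⟨p, l, hp, hl, rfl⟩, -⟩ := h
  exact Nat.one_lt_pow hl.ne' hp.one_lt

lemma dvd_of_dvd_dq (h : IsDicksonPair q n) {d : ℕ}
    (hd : d ≠ 0) (hdvd : n ∣ dq q d) : n ∣ d := by
  have hq := h.one_lt
  obtain ⟨-, hn, -, hdiv, h4⟩ := h
  refine (Nat.factorization_prime_le_iff_dvd hn.ne' hd).mp fun p hp => ?_
  have := Fact.mk hp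
  rw [Nat.factorization_def _ hp, Nat.factorization_def _ hp]
  by_cases hpn : p ∣ n
  swap
  · simp [padicValNat.eq_zero_of_not_dvd hpn]
  have hpq := hdiv p hp hpn
  have hle : padicValNat p n ≤ padicValNat p (dq q d) :=
    (padicValNat_dvd_iff_le (dq_pos q hd).ne').mp (pow_padicValNat_dvd.trans hdvd)
  by_cases hbad : p = 2 ∧ ¬ 4 ∣ q - 1
  · -- Here `q ≡ 3 (mod 4)`, so `4 ∤ n` and it suffices that `2 ∣ d`; but `[d]_q ≡ d (mod 2)`.
    obtain ⟨rfl, hq4⟩ := hbad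
    have hn2 : padicValNat 2 n ≤ 1 := by
      by_contra! hc
      exact h4 (by omega) ((pow_dvd_pow 2 hc).trans pow_padicValNat_dvd)
    have hdq := dq_modEq_of_modEq_one ((Nat.modEq_iff_dvd' hq.le).mpr hpq).symm d
    have h2d : 2 ∣ d :=
      Nat.modEq_zero_iff_dvd.mp (hdq.symm.trans (Nat.modEq_zero_iff_dvd.mpr (hpn.trans hdvd)))
    have := one_le_padicValNat_of_dvd hd h2d
    omega
  · have h2 : p = 2 → 4 ∣ q - 1 := fun hp2 => not_not.mp (not_and.mp hbad hp2)
    rwa [padicValNat_dq hq hpq h2 hd] at hle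

lemma coprime (h : IsDicksonPair q n) : n.Coprime q :=
  Nat.coprime_of_dvd fun p hp hpn => not_dvd_of_dvd_sub_one hp h.1 (h.2.2.2.1 p hp hpn)

lemma dvd_sub_of_dq_modEq (h : IsDicksonPair q n) {a b : ℕ}
    (hab : a < b) (hmod : dq q a ≡ dq q b [MOD n]) : n ∣ b - a := by
  have hsplit : dq q b = dq q a + q ^ a * dq q (b - a) := by
    rw [← dq_add, Nat.add_sub_cancel' hab.le]
  rw [hsplit] at hmod
  have : n ∣ q ^ a * dq q (b - a) :=
    Nat.modEq_zero_iff_dvd.mp (Nat.ModEq.add_left_cancel' (dq q a) (by simpa using hmod)).symm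
  exact h.dvd_of_dvd_dq (by omega) ((h.coprime.pow_right a).dvd_of_dvd_mul_left this)

lemma exists_dq_modEq (h : IsDicksonPair q n) (j : ℕ) :
    ∃ k, 1 ≤ k ∧ k ≤ n ∧ dq q k ≡ j [MOD n] := by
  have : NeZero n := ⟨h.2.1.ne'⟩
  let f : Fin n → ZMod n := fun i => (dq q (i + 1) : ℕ)
  have hf : f.Injective := by
    have hstrict : ∀ a b : Fin n, a < b → f a ≠ f b := fun a b hab hfab => by
      have := h.dvd_sub_of_dq_modEq (Nat.succ_lt_succ hab)
        ((ZMod.natCast_eq_natCast_iff _ _ n).mp hfab)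
      exact absurd (Nat.le_of_dvd (by omega) this) (by omega)
    intro a b hab
    by_contra hne
    rcases lt_or_gt_of_ne hne with hlt | hlt
    exacts [hstrict a b hlt hab, hstrict b a hlt hab.symm]
  obtain ⟨i, hi⟩ := ((Fintype.bijective_iff_injective_and_card f).mpr ⟨hf, by simp⟩).2 j
  exact ⟨i + 1, by omega, i.2, (ZMod.natCast_eq_natCast_iff _ _ n).mp hi⟩

lemma dvd_pow_sub_one (h : IsDicksonPair q n) : n ∣ q ^ n - 1 := by
  obtain ⟨k, hk1, hkn, hk⟩ := h.exists_dq_modEq 0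
  have hnk : n ∣ k := h.dvd_of_dvd_dq (by omega) (Nat.modEq_zero_iff_dvd.mp hk)
  obtain rfl : k = n := le_antisymm hkn (Nat.le_of_dvd (by omega) hnk)
  exact (Nat.modEq_zero_iff_dvd.mp hk).trans (Dvd.intro _ (dq_mul_sub_one h.one_lt.le k))

end IsDicksonPair

lemma inCoset_pow {F : Type*} [Field F] {g : F} {q n N k j : ℕ} (hgN : g ^ N = 1) (hN : 0 < N)
    (hnN : n ∣ N) (hkj : dq q k ≡ j [MOD n]) : inCoset g q n k (g ^ j) := by
  set t := dq q k
  -- Shift the exponent `j` by a multiple of `N` to make it at least `t`.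
  have hle : t ≤ j + N * t := le_add_left (Nat.le_mul_of_pos_left t hN)
  have hmod : t ≡ j + N * t [MOD n] :=
    hkj.trans (by simpa using (Nat.modEq_zero_iff_dvd.mpr (hnN.mul_right t)).add_left j)
  obtain ⟨m, hm⟩ := (Nat.modEq_iff_dvd' hle).mp hmod
  refine ⟨m, ?_⟩
  calc g ^ j = g ^ (j + N * t) := by rw [pow_add, pow_mul, hgN, one_pow, mul_one]
    _ = g ^ t * (g ^ n) ^ m := by rw [← pow_mul, ← pow_add]; congr 1; omega

lemma ne_zero_of_forall_eq_pow {M₀ : Type*} [MonoidWithZero M₀] [Fintype M₀]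
    (hM₀ : 2 < Fintype.card M₀) {g : M₀} (hg : ∀ x : M₀, x ≠ 0 → ∃ j : ℕ, x = g ^ j) :
    g ≠ 0 := by
  rintro rfl
  classical
  have hsub : (Finset.univ : Finset M₀) ⊆ {0, 1} := fun x _ => by
    by_cases hx : x = 0
    · simp [hx]
    · obtain ⟨j, rfl⟩ := hg x hx
      cases j <;> simp
  exact hM₀.not_ge ((Finset.card_le_card hsub).trans Finset.card_le_two)

lemma pow_eq_self_iff_of_ne_zero {M₀ : Type*} [MonoidWithZero M₀] [IsRightCancelMulZero M₀]
    {x : M₀} (hx : x ≠ 0) {m : ℕ} (hm : m ≠ 0) : x ^ m = x ↔ x ^ (m - 1) = 1 := by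
  conv_lhs => rw [← Nat.sub_add_cancel (Nat.one_le_iff_ne_zero.mpr hm), pow_succ]
  exact mul_eq_right₀ hx

lemma card_setOf_pow_eq_self {F : Type*} [Field F] [Finite F] {m : ℕ} (hm : m ≠ 0) :
    Nat.card {x : F | x ^ m = x} = (Nat.card F - 1).gcd (m - 1) + 1 := by
  have hset : {x : F | x ^ m = x} =
      insert 0 (Units.val '' ((powMonoidHom (m - 1) : Fˣ →* Fˣ).ker : Set Fˣ)) := by
    ext x
    rcases eq_or_ne x 0 with rfl | hx
    · simp [zero_pow hm]
    · simp only [Set.mem_ofPred_eq, pow_eq_self_iff_of_ne_zero hx hm, Set.mem_insert_iff, hx,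
        Set.mem_image, SetLike.mem_coe, MonoidHom.mem_ker, powMonoidHom_apply, false_or]
      exact ⟨fun h => ⟨Units.mk0 x hx, Units.ext (by simpa using h), rfl⟩,
        fun ⟨u, hu, hux⟩ => hux ▸ by simpa using congrArg Units.val hu⟩
  rw [hset, Nat.card_coe_set_eq, Set.ncard_insert_of_notMem (by simp),
    Set.ncard_image_of_injective _ Units.val_injective, ← Nat.card_coe_set_eq,
    SetLike.coe_sort_coe, IsCyclic.card_powMonoidHom_ker, Nat.card_units]

section DistributiveSubmodule

open FiniteField

variable (K : Type*) {L : Type*} [Field K] [Fintype K] [CommRing L] [Algebra K L]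

/-- `D(α, β)` when `α`, `β` and `α + β` act on the right by `λ ↦ λ ^ q ^ a`, `λ ^ q ^ b` and
`λ ^ q ^ c`, where `q = #K`. -/
def distributiveSubmodule (α β : L) (a b c : ℕ) : Submodule K L :=
  LinearMap.eqLocus ((α + β) • (frobeniusAlgHom K L ^ c).toLinearMap)
    (α • (frobeniusAlgHom K L ^ a).toLinearMap + β • (frobeniusAlgHom K L ^ b).toLinearMap)

variable {K}

lemma mem_distributiveSubmodule {α β x : L} {a b c : ℕ} :
    x ∈ distributiveSubmodule K α β a b c ↔ (α + β) * x ^ Fintype.card K ^ c =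
      α * x ^ Fintype.card K ^ a + β * x ^ Fintype.card K ^ b := by
  simp [distributiveSubmodule, AlgHom.coe_pow, coe_frobeniusAlgHom, pow_iterate]

lemma one_mem_distributiveSubmodule (α β : L) (a b c : ℕ) :
    1 ∈ distributiveSubmodule K α β a b c := by
  simp [mem_distributiveSubmodule]

lemma exists_ncard_distributiveSubmodule [Finite L] [Nontrivial L] (α β : L) (a b c : ℕ) :
    ∃ r, 0 < r ∧ (distributiveSubmodule K α β a b c : Set L).ncard = Fintype.card K ^ r := by
  set D := distributiveSubmodule K α β a b c
  have : Module.Finite K D := Module.Finite.of_finite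
  refine ⟨Module.finrank K D, Module.finrank_pos_iff_exists_ne_zero.mpr
    ⟨⟨1, one_mem_distributiveSubmodule α β a b c⟩, by simp⟩, ?_⟩
  rw [← Nat.card_coe_set_eq, SetLike.coe_sort_coe, Module.natCard_eq_pow_finrank (K := K),
    Nat.card_eq_fintype_card]

end DistributiveSubmodule

lemma exists_circ_eq {F : Type*} [Field F] [Fintype F] {q n : ℕ} (hqn : IsDicksonPair q n)
    (hcard : Fintype.card F = q ^ n) {g : F} (hg0 : g ≠ 0)
    (hg : ∀ x : F, x ≠ 0 → ∃ j : ℕ, x = g ^ j) {circ : F → F → F}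
    (hcirc0 : ∀ lam : F, circ 0 lam = 0)
    (hcirc : ∀ k : ℕ, 1 ≤ k → k ≤ n → ∀ x : F, inCoset g q n k x →
      ∀ lam : F, circ x lam = x * lam ^ q ^ k) (x : F) :
    ∃ k : ℕ, ∀ lam : F, circ x lam = x * lam ^ q ^ k := by
  rcases eq_or_ne x 0 with rfl | hx
  · exact ⟨0, by simp [hcirc0]⟩
  obtain ⟨j, rfl⟩ := hg x hx
  obtain ⟨k, hk1, hkn, hk⟩ := hqn.exists_dq_modEq j
  have hgN : g ^ (q ^ n - 1) = 1 := hcard ▸ FiniteField.pow_card_sub_one_eq_one g hg0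
  have hN : 0 < q ^ n - 1 := Nat.sub_pos_of_lt (Nat.one_lt_pow hqn.2.1.ne' hqn.one_lt)
  exact ⟨k, hcirc k hk1 hkn _ (inCoset_pow hgN hN hqn.dvd_pow_sub_one hk)⟩

/-- Dickson nearfield setup with `n > 2`: for every `α, β ∈ F` the set `D(α,β)`
contains `0` and `1`, is closed under addition, is closed under multiplication by
elements of the subfield `{k : k^q = k}`, and has cardinality `q^k` for some
positive integer `k`. -/
theorem distributiveSet_card_pow_q {F : Type*} [Field F] [Fintype F]
    (q n : ℕ) (hqn : IsDicksonPair q n) (hn : 2 < n)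
    (hcard : Fintype.card F = q ^ n)
    (g : F) (hg : ∀ x : F, x ≠ 0 → ∃ j : ℕ, x = g ^ j)
    (circ : F → F → F)
    (hcirc0 : ∀ lam : F, circ 0 lam = 0)
    (hcirc : ∀ k : ℕ, 1 ≤ k → k ≤ n → ∀ x : F, inCoset g q n k x →
      ∀ lam : F, circ x lam = x * lam ^ q ^ k) :
    ∀ α β : F,
      (0 : F) ∈ {lam : F | circ (α + β) lam = circ α lam + circ β lam} ∧
      (1 : F) ∈ {lam : F | circ (α + β) lam = circ α lam + circ β lam} ∧
      (∀ lam₁ ∈ {lam : F | circ (α + β) lam = circ α lam + circ β lam},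
        ∀ lam₂ ∈ {lam : F | circ (α + β) lam = circ α lam + circ β lam},
          lam₁ + lam₂ ∈ {lam : F | circ (α + β) lam = circ α lam + circ β lam}) ∧
      (∀ k : F, k ^ q = k →
        ∀ lam₀ ∈ {lam : F | circ (α + β) lam = circ α lam + circ β lam},
          k * lam₀ ∈ {lam : F | circ (α + β) lam = circ α lam + circ β lam}) ∧
      ∃ k : ℕ, 0 < k ∧
        {lam : F | circ (α + β) lam = circ α lam + circ β lam}.ncard = q ^ k := by
  classical
  have hF : 2 < Fintype.card F :=
    hcard ▸ (hn.trans Nat.lt_two_pow_self).trans_le (Nat.pow_le_pow_left hqn.one_lt n)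
  have hg0 : g ≠ 0 := ne_zero_of_forall_eq_pow hF hg
  obtain ⟨p, l, hp, -, rfl⟩ := hqn.2.2.1
  have := Fact.mk hp
  have : CharP F p := charP_of_card_eq_prime_pow (hcard.trans (pow_mul p l n).symm)
  let E := (iterateFrobenius F p l).eqLocusField (RingHom.id F)
  have hE : Fintype.card E = p ^ l := by
    have hEset : (E : Set F) = {x | x ^ p ^ l = x} := by
      ext x; simp [E, RingHom.mem_eqLocusField, iterateFrobenius_def]
    rw [← Nat.card_eq_fintype_card, ← SetLike.coe_sort_coe, hEset,
      card_setOf_pow_eq_self (pow_ne_zero l hp.ne_zero), Nat.card_eq_fintype_card, hcard,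
      Nat.gcd_eq_right (Nat.sub_one_dvd_pow_sub_one _ n), Nat.sub_add_cancel hqn.1]
  intro α β
  obtain ⟨a, ha⟩ := exists_circ_eq hqn hcard hg0 hg hcirc0 hcirc α
  obtain ⟨b, hb⟩ := exists_circ_eq hqn hcard hg0 hg hcirc0 hcirc β
  obtain ⟨c, hc⟩ := exists_circ_eq hqn hcard hg0 hg hcirc0 hcirc (α + β)
  have hD : {lam : F | circ (α + β) lam = circ α lam + circ β lam} =
      distributiveSubmodule E α β a b c := by
    ext lam
    simp [mem_distributiveSubmodule, hE, ha, hb, hc]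
  rw [hD]
  refine ⟨zero_mem _, one_mem_distributiveSubmodule α β a b c, fun _ h₁ _ h₂ => add_mem h₁ h₂,
    fun k hk _ h =>
      Submodule.smul_mem _ (⟨k, by simpa [E, iterateFrobenius_def] using hk⟩ : E) h,
    hE ▸ exists_ncard_distributiveSubmodule α β a b c⟩
end
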